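/- arXiv:1501.04610 — 4 statements merged into one kernel-verified Lean document; each statement's English description precedes it below -/
import Mathlib

section
/- Let a, b, c, d be real numbers with ad − bc = 1 and let φ(x) = (ax + b)/(cx + d). Suppose there exist three distinct rational numbers q₁, q₂, q₃ with c·qᵢ + d ≠ 0 for each i such that φ(qᵢ) is rational for each i. Then (i) there exists a nonzero real number λ such that λa, λb, λc, λd are all rational, and (ii) for every rational number q with cq + d ≠ 0 the value φ(q) is rational, while for every irrational real number x with cx + d ≠ 0 the value φ(x) is irrational. -/
/-!
Clearing denominators, `φ(qᵢ) = rᵢ` reads `a qᵢ + b = rᵢ (c qᵢ + d)`, a linear condition on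
`(a, b, c, d)` with rational coefficients. If `c ≠ 0`, eliminating `a` from the three conditions
leaves a rational linear relation between `c` and `d` whose coefficient of `d` is nonzero, so the
pole `-d/c` is rational. After scaling so that `c` and `d` are rational, `a` and `b` are the
coefficients of an affine function taking rational values at two rational points, hence rational.
Thus `φ` is a Möbius map with rational coefficients, and its inverse is one as well, which gives (ii).
-/

theorem mobius_sub_mul_eq {R : Type*} [CommRing R] {a b c d x x' y y' : R}
    (h : a * x + b = y * (c * x + d)) (h' : a * x' + b = y' * (c * x' + d)) :
    (y - y') * (c * x + d) * (c * x' + d) = (a * d - b * c) * (x - x') := by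
  linear_combination (-(c * x' + d)) * h + (c * x + d) * h'

theorem mobius_inverse_eq {K : Type*} [Field K] {a b c d x : K}
    (hdet : a * d - b * c ≠ 0) (hx : c * x + d ≠ 0) :
    x = (d * ((a * x + b) / (c * x + d)) - b) / (a - c * ((a * x + b) / (c * x + d))) := by
  have hinv : a - c * ((a * x + b) / (c * x + d)) = (a * d - b * c) / (c * x + d) := by
    field_simp
    ring
  rw [hinv, eq_div_iff (div_ne_zero hdet hx), mul_div_assoc', div_eq_iff hx, sub_mul,
    mul_assoc, div_mul_cancel₀ _ hx]
  ring

theorem Irrational.mobius_ratCast {a b c d : ℚ} (hdet : a * d - b * c ≠ 0) {x : ℝ}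
    (hx : Irrational x) (hden : c * x + d ≠ 0) :
    Irrational ((a * x + b) / (c * x + d)) := by
  rintro ⟨r, hr⟩
  refine hx ⟨(d * r - b) / (a - c * r), ?_⟩
  have hdetℝ : (a : ℝ) * d - b * c ≠ 0 := by exact_mod_cast hdet
  push_cast
  rw [hr]
  exact (mobius_inverse_eq hdetℝ hden).symm

theorem exists_rat_coeffs_of_affine {a b : ℝ} {q₁ q₂ s₁ s₂ : ℚ} (hq : q₁ ≠ q₂)
    (h₁ : a * q₁ + b = s₁) (h₂ : a * q₂ + b = s₂) :
    (∃ ra : ℚ, a = ra) ∧ ∃ rb : ℚ, b = rb := by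
  have hqℝ : (q₁ : ℝ) - q₂ ≠ 0 := sub_ne_zero.2 (by exact_mod_cast hq)
  refine ⟨⟨(s₁ - s₂) / (q₁ - q₂), ?_⟩, ⟨(s₂ * q₁ - s₁ * q₂) / (q₁ - q₂), ?_⟩⟩
  · push_cast
    rw [eq_div_iff hqℝ]
    linear_combination h₁ - h₂
  · push_cast
    rw [eq_div_iff hqℝ]
    linear_combination (q₁ : ℝ) * h₂ - (q₂ : ℝ) * h₁

section ThreePoints

variable {a b c d : ℝ} {q₁ q₂ q₃ r₁ r₂ r₃ : ℚ}

theorem exists_rat_div_of_three_points (hc : c ≠ 0) (hdet : a * d - b * c ≠ 0)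
    (h12 : q₁ ≠ q₂) (h13 : q₁ ≠ q₃) (h23 : q₂ ≠ q₃)
    (e₁ : a * q₁ + b = r₁ * (c * q₁ + d)) (e₂ : a * q₂ + b = r₂ * (c * q₂ + d))
    (e₃ : a * q₃ + b = r₃ * (c * q₃ + d)) :
    ∃ p : ℚ, d / c = p := by
  -- eliminating `a` from `c (rᵢ qᵢ) + d rᵢ = a qᵢ + b` gives `c P + d Q = 0`
  set Q : ℚ := (r₁ - r₂) * (q₁ - q₃) - (r₁ - r₃) * (q₁ - q₂)
  set P : ℚ := (r₁ * q₁ - r₂ * q₂) * (q₁ - q₃) - (r₁ * q₁ - r₃ * q₃) * (q₁ - q₂)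
  have hPQ : c * P + d * Q = 0 := by
    simp only [P, Q]
    push_cast
    linear_combination (-((q₁ : ℝ) - q₃) + ((q₁ : ℝ) - q₂)) * e₁ + ((q₁ : ℝ) - q₃) * e₂
      - ((q₁ : ℝ) - q₂) * e₃
  have hQ : (Q : ℝ) * ((c * q₁ + d) * (c * q₂ + d) * (c * q₃ + d)) =
      (a * d - b * c) * ((q₁ - q₂) * (q₁ - q₃) * (c * (q₃ - q₂))) := by
    simp only [Q]
    push_cast
    linear_combination ((q₁ : ℝ) - q₃) * (c * q₃ + d) * mobius_sub_mul_eq e₁ e₂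
      - ((q₁ : ℝ) - q₂) * (c * q₂ + d) * mobius_sub_mul_eq e₁ e₃
  have hQ0 : (Q : ℝ) ≠ 0 := by
    have h12ℝ : (q₁ : ℝ) - q₂ ≠ 0 := sub_ne_zero.2 (by exact_mod_cast h12)
    have h13ℝ : (q₁ : ℝ) - q₃ ≠ 0 := sub_ne_zero.2 (by exact_mod_cast h13)
    have h32ℝ : (q₃ : ℝ) - q₂ ≠ 0 := sub_ne_zero.2 (by exact_mod_cast h23.symm)
    rintro h
    rw [h, zero_mul, eq_comm] at hQ
    exact mul_ne_zero hdet (mul_ne_zero (mul_ne_zero h12ℝ h13ℝ) (mul_ne_zero hc h32ℝ)) hQ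
  refine ⟨-P / Q, ?_⟩
  push_cast
  rw [div_eq_div_iff hc hQ0]
  linear_combination hPQ

theorem exists_smul_denom_rat_of_three_points (hdet : a * d - b * c ≠ 0)
    (h12 : q₁ ≠ q₂) (h13 : q₁ ≠ q₃) (h23 : q₂ ≠ q₃)
    (e₁ : a * q₁ + b = r₁ * (c * q₁ + d)) (e₂ : a * q₂ + b = r₂ * (c * q₂ + d))
    (e₃ : a * q₃ + b = r₃ * (c * q₃ + d)) :
    ∃ lam : ℝ, lam ≠ 0 ∧ (∃ rc : ℚ, lam * c = rc) ∧ ∃ rd : ℚ, lam * d = rd := by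
  by_cases hc : c = 0
  · have hd : d ≠ 0 := by
      rintro rfl
      simp [hc] at hdet
    exact ⟨1 / d, one_div_ne_zero hd, ⟨0, by simp [hc]⟩, ⟨1, by field_simp; norm_num⟩⟩
  · obtain ⟨p, hp⟩ := exists_rat_div_of_three_points hc hdet h12 h13 h23 e₁ e₂ e₃
    exact ⟨1 / c, one_div_ne_zero hc, ⟨1, by field_simp; norm_num⟩, ⟨p, by rw [← hp]; ring⟩⟩

theorem exists_smul_rat_of_three_points (hdet : a * d - b * c ≠ 0)
    (h12 : q₁ ≠ q₂) (h13 : q₁ ≠ q₃) (h23 : q₂ ≠ q₃)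
    (e₁ : a * q₁ + b = r₁ * (c * q₁ + d)) (e₂ : a * q₂ + b = r₂ * (c * q₂ + d))
    (e₃ : a * q₃ + b = r₃ * (c * q₃ + d)) :
    ∃ lam : ℝ, lam ≠ 0 ∧ (∃ ra : ℚ, lam * a = ra) ∧ (∃ rb : ℚ, lam * b = rb) ∧
      (∃ rc : ℚ, lam * c = rc) ∧ (∃ rd : ℚ, lam * d = rd) := by
  obtain ⟨lam, hlam, ⟨rc, hrc⟩, ⟨rd, hrd⟩⟩ :=
    exists_smul_denom_rat_of_three_points hdet h12 h13 h23 e₁ e₂ e₃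
  have scaled {q r : ℚ} (e : a * q + b = r * (c * q + d)) :
      lam * a * q + lam * b = ((r * (rc * q + rd) : ℚ) : ℝ) := by
    push_cast
    linear_combination lam * e + (r : ℝ) * q * hrc + (r : ℝ) * hrd
  obtain ⟨hra, hrb⟩ := exists_rat_coeffs_of_affine h12 (scaled e₁) (scaled e₂)
  exact ⟨lam, hlam, hra, hrb, ⟨rc, hrc⟩, ⟨rd, hrd⟩⟩

theorem mobius_rat_and_irrational_of_smul_rat {lam : ℝ} {ra rb rc rd : ℚ}
    (hdet : a * d - b * c ≠ 0) (hlam : lam ≠ 0) (hra : lam * a = ra) (hrb : lam * b = rb)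
    (hrc : lam * c = rc) (hrd : lam * d = rd) :
    (∀ q : ℚ, ∃ r : ℚ, (a * q + b) / (c * q + d) = r) ∧
    (∀ x : ℝ, Irrational x → c * x + d ≠ 0 → Irrational ((a * x + b) / (c * x + d))) := by
  have hφ (x : ℝ) : (a * x + b) / (c * x + d) = (ra * x + rb) / (rc * x + rd) := by
    rw [← hra, ← hrb, ← hrc, ← hrd, ← mul_div_mul_left _ _ hlam]
    ring
  have hdetℚ : ra * rd - rb * rc ≠ 0 := by
    have : ((ra * rd - rb * rc : ℚ) : ℝ) = lam ^ 2 * (a * d - b * c) := by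
      push_cast
      rw [← hra, ← hrb, ← hrc, ← hrd]
      ring
    exact_mod_cast this ▸ mul_ne_zero (pow_ne_zero 2 hlam) hdet
  refine ⟨fun q ↦ ⟨(ra * q + rb) / (rc * q + rd), by rw [hφ]; push_cast; rfl⟩, ?_⟩
  intro x hx hx0
  have hden : (rc : ℝ) * x + rd ≠ 0 := by
    rw [← hrc, ← hrd, show lam * c * x + lam * d = lam * (c * x + d) by ring]
    exact mul_ne_zero hlam hx0
  rw [hφ]
  exact hx.mobius_ratCast hdetℚ hden

end ThreePoints

/-- Möbius transformation with determinant 1 taking three distinct rationals to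
rationals: the coefficients are rational up to a common nonzero scalar, the map
takes rationals to rationals and irrationals to irrationals. -/
theorem mobius_three_rationals (a b c d : ℝ) (hdet : a * d - b * c = 1)
    (q₁ q₂ q₃ : ℚ) (h12 : q₁ ≠ q₂) (h13 : q₁ ≠ q₃) (h23 : q₂ ≠ q₃)
    (hd1 : c * q₁ + d ≠ 0) (hd2 : c * q₂ + d ≠ 0) (hd3 : c * q₃ + d ≠ 0)
    (hr1 : ∃ r : ℚ, (a * q₁ + b) / (c * q₁ + d) = r)
    (hr2 : ∃ r : ℚ, (a * q₂ + b) / (c * q₂ + d) = r)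
    (hr3 : ∃ r : ℚ, (a * q₃ + b) / (c * q₃ + d) = r) :
    (∃ lam : ℝ, lam ≠ 0 ∧ (∃ ra : ℚ, lam * a = ra) ∧ (∃ rb : ℚ, lam * b = rb) ∧
      (∃ rc : ℚ, lam * c = rc) ∧ (∃ rd : ℚ, lam * d = rd)) ∧
    (∀ q : ℚ, c * q + d ≠ 0 → ∃ r : ℚ, (a * q + b) / (c * q + d) = r) ∧
    (∀ x : ℝ, Irrational x → c * x + d ≠ 0 →
      Irrational ((a * x + b) / (c * x + d))) := by
  obtain ⟨r₁, e₁⟩ := hr1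
  obtain ⟨r₂, e₂⟩ := hr2
  obtain ⟨r₃, e₃⟩ := hr3
  rw [div_eq_iff hd1] at e₁
  rw [div_eq_iff hd2] at e₂
  rw [div_eq_iff hd3] at e₃
  have hdet0 : a * d - b * c ≠ 0 := by rw [hdet]; exact one_ne_zero
  have hscale := exists_smul_rat_of_three_points hdet0 h12 h13 h23 e₁ e₂ e₃
  refine ⟨hscale, ?_⟩
  obtain ⟨lam, hlam, ⟨ra, hra⟩, ⟨rb, hrb⟩, ⟨rc, hrc⟩, ⟨rd, hrd⟩⟩ := hscale
  obtain ⟨hrat, hirr⟩ := mobius_rat_and_irrational_of_smul_rat hdet0 hlam hra hrb hrc hrd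
  exact ⟨fun q _ ↦ hrat q, hirr⟩
end

section
/- Let n ≥ 1, R > 0, and λ ≥ 0. There exists a constant C > 0, depending only on n, R and λ, with the following property: for every ε ∈ (0, 1] and every closed convex symmetric set K in n-dimensional Euclidean space with K contained in the closed ball of radius R centered at the origin and with the closed ball of radius ε centered at the origin NOT contained in K, the Lebesgue measure of the closed λε-neighborhood {x : dist(x, K) ≤ λε} of K is at most C·ε. -/
open Metric MeasureTheory Set Module
open scoped RealInnerProductSpace

/-!
A point of `closedBall 0 ε` outside `K` is separated from `K` by a unit vector `w`; since `K` is
symmetric, `K` lies in the slab `|⟪w, y⟫| ≤ ε`. Its `λε`-neighborhood then lies in the slab of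
half-width `(1 + λ)ε` intersected with the ball of radius `R + λ`, which, in an orthonormal basis
starting with `w`, is contained in a box of volume `2(1 + λ)ε · (2(R + λ))ⁿ⁻¹`.
-/

theorem exists_dual_abs_le_of_not_closedBall_subset {E : Type*} [NormedAddCommGroup E]
    [NormedSpace ℝ E] {K : Set E} {ε : ℝ} (hKc : IsClosed K) (hKconv : Convex ℝ K)
    (hKsym : ∀ x ∈ K, -x ∈ K) (hKne : K.Nonempty) (hK : ¬ closedBall 0 ε ⊆ K) :
    ∃ f : StrongDual ℝ E, f ≠ 0 ∧ ∀ y ∈ K, |f y| ≤ ‖f‖ * ε := by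
  obtain ⟨x, hx, hxK⟩ := not_subset.mp hK
  obtain ⟨f, u, hfK, hfx⟩ := geometric_hahn_banach_closed_point hKconv hKc hxK
  have hfK_abs : ∀ y ∈ K, |f y| < u := fun y hy =>
    abs_lt.mpr ⟨by linarith [map_neg f y ▸ hfK _ (hKsym y hy)], hfK y hy⟩
  have hfx_le : f x ≤ ‖f‖ * ε :=
    (le_abs_self _).trans <| (f.le_opNorm x).trans <|
      mul_le_mul_of_nonneg_left (mem_closedBall_zero_iff.mp hx) (norm_nonneg f)
  obtain ⟨y₀, hy₀⟩ := hKne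
  have hu : 0 < u := (abs_nonneg _).trans_lt (hfK_abs y₀ hy₀)
  refine ⟨f, ?_, fun y hy => (hfK_abs y hy).le.trans (hfx.trans_le hfx_le).le⟩
  rintro rfl
  exact (hu.trans hfx).ne rfl

theorem exists_norm_eq_one_abs_inner_le_of_not_closedBall_subset {E : Type*}
    [NormedAddCommGroup E] [InnerProductSpace ℝ E] [CompleteSpace E] {K : Set E} {ε : ℝ}
    (hKc : IsClosed K) (hKconv : Convex ℝ K) (hKsym : ∀ x ∈ K, -x ∈ K) (hKne : K.Nonempty)
    (hK : ¬ closedBall 0 ε ⊆ K) :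
    ∃ w : E, ‖w‖ = 1 ∧ ∀ y ∈ K, |⟪w, y⟫| ≤ ε := by
  obtain ⟨f, hf0, hfK⟩ := exists_dual_abs_le_of_not_closedBall_subset hKc hKconv hKsym hKne hK
  set v := (InnerProductSpace.toDual ℝ E).symm f
  have hv : ‖v‖ = ‖f‖ := by simp [v]
  have hfpos : 0 < ‖f‖ := norm_pos_iff.mpr hf0
  refine ⟨‖f‖⁻¹ • v, by rw [norm_smul, hv, norm_inv, norm_norm, inv_mul_cancel₀ hfpos.ne'],
    fun y hy => ?_⟩
  rw [real_inner_smul_left, InnerProductSpace.toDual_symm_apply, abs_mul, abs_inv, abs_norm,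
    inv_mul_le_iff₀ hfpos]
  exact hfK y hy

theorem cthickening_subset_setOf_abs_inner_le_and_norm_le {E : Type*}
    [NormedAddCommGroup E] [InnerProductSpace ℝ E] [ProperSpace E] {K : Set E} {w : E}
    {c R δ : ℝ} (hKc : IsClosed K) (hδ : 0 ≤ δ) (hw : ‖w‖ = 1) (hKw : ∀ y ∈ K, |⟪w, y⟫| ≤ c)
    (hKR : K ⊆ closedBall 0 R) :
    cthickening δ K ⊆ {y | |⟪w, y⟫| ≤ c + δ ∧ ‖y‖ ≤ R + δ} := by
  rw [hKc.cthickening_eq_biUnion_closedBall hδ]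
  simp only [iUnion_subset_iff]
  intro z hz y hy
  rw [mem_closedBall, dist_eq_norm] at hy
  have hzR : ‖z‖ ≤ R := mem_closedBall_zero_iff.mp (hKR hz)
  have hwyz : |⟪w, y - z⟫| ≤ δ :=
    (abs_real_inner_le_norm w _).trans (by rw [hw, one_mul]; exact hy)
  constructor
  · calc |⟪w, y⟫| = |⟪w, z⟫ + ⟪w, y - z⟫| := by rw [inner_sub_right, add_sub_cancel]
      _ ≤ |⟪w, z⟫| + |⟪w, y - z⟫| := abs_add_le _ _
      _ ≤ c + δ := add_le_add (hKw z hz) hwyz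
  · calc ‖y‖ = ‖z + (y - z)‖ := by rw [add_sub_cancel]
      _ ≤ ‖z‖ + ‖y - z‖ := norm_add_le _ _
      _ ≤ R + δ := add_le_add hzR hy

theorem volume_Icc_neg_update {ι : Type*} [Fintype ι] [DecidableEq ι] (i₀ : ι) (a b : ℝ) :
    volume (Icc (-Function.update (fun _ => b) i₀ a) (Function.update (fun _ => b) i₀ a))
      = ENNReal.ofReal (2 * a) * ENNReal.ofReal (2 * b) ^ (Fintype.card ι - 1) := by
  rw [Real.volume_Icc_pi, ← Finset.mul_prod_erase _ _ (Finset.mem_univ i₀),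
    Finset.prod_congr rfl fun i hi => by
      rw [Pi.neg_apply, Function.update_of_ne (Finset.ne_of_mem_erase hi)],
    Finset.prod_const, Finset.card_erase_of_mem (Finset.mem_univ i₀), Finset.card_univ]
  simp only [Pi.neg_apply, Function.update_self, sub_neg_eq_add, two_mul]

section Volume

variable {E : Type*} [NormedAddCommGroup E] [InnerProductSpace ℝ E] [FiniteDimensional ℝ E]
  [MeasurableSpace E] [BorelSpace E]

theorem OrthonormalBasis.volume_setOf_abs_inner_le_and_norm_le_le {ι : Type*} [Fintype ι]
    [DecidableEq ι] (bas : OrthonormalBasis ι ℝ E) (i₀ : ι) (a b : ℝ) :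
    volume {y : E | |⟪bas i₀, y⟫| ≤ a ∧ ‖y‖ ≤ b}
      ≤ ENNReal.ofReal (2 * a) * ENNReal.ofReal (2 * b) ^ (Fintype.card ι - 1) := by
  set r : ι → ℝ := Function.update (fun _ => b) i₀ a
  have hrepr : MeasurePreserving (fun y => WithLp.ofLp (bas.repr y)) :=
    (PiLp.volume_preserving_ofLp ι).comp bas.measurePreserving_repr
  have hsub : {y : E | |⟪bas i₀, y⟫| ≤ a ∧ ‖y‖ ≤ b}
      ⊆ (fun y => WithLp.ofLp (bas.repr y)) ⁻¹' Icc (-r) r := by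
    rintro y ⟨hya, hyb⟩
    have hcoord : ∀ i, |WithLp.ofLp (bas.repr y) i| ≤ r i := by
      intro i
      rw [bas.repr_apply_apply]
      rcases eq_or_ne i i₀ with rfl | hi
      · simpa [r] using hya
      · rw [show r i = b from Function.update_of_ne hi _ _]
        exact (abs_real_inner_le_norm _ _).trans (by rw [bas.norm_eq_one, one_mul]; exact hyb)
    exact ⟨fun i => neg_le_of_abs_le (hcoord i), fun i => le_of_abs_le (hcoord i)⟩
  calc volume {y : E | |⟪bas i₀, y⟫| ≤ a ∧ ‖y‖ ≤ b}
      ≤ volume ((fun y => WithLp.ofLp (bas.repr y)) ⁻¹' Icc (-r) r) := measure_mono hsub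
    _ = volume (Icc (-r) r) := hrepr.measure_preimage measurableSet_Icc.nullMeasurableSet
    _ = _ := volume_Icc_neg_update i₀ a b

theorem volume_setOf_abs_inner_le_and_norm_le_le {w : E} (hw : ‖w‖ = 1) (a b : ℝ) :
    volume {y : E | |⟪w, y⟫| ≤ a ∧ ‖y‖ ≤ b}
      ≤ ENNReal.ofReal (2 * a) * ENNReal.ofReal (2 * b) ^ (finrank ℝ E - 1) := by
  have hpos : 0 < finrank ℝ E :=
    finrank_pos_iff_exists_ne_zero.mpr ⟨w, norm_ne_zero_iff.mp (hw.symm ▸ one_ne_zero)⟩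
  let i₀ : Fin (finrank ℝ E) := ⟨0, hpos⟩
  have hw' : Orthonormal ℝ (({i₀} : Set _).domRestrict fun _ => w) :=
    orthonormal_subsingleton_iff.mpr fun _ => hw
  obtain ⟨bas, hbas⟩ := hw'.exists_orthonormalBasis_extension_of_card_eq (Fintype.card_fin _).symm
  simpa [hbas i₀ rfl] using bas.volume_setOf_abs_inner_le_and_norm_le_le i₀ a b

end Volume

theorem symmetric_convex_neighborhood_volume_general (n : ℕ)
    (R : ℝ) (hR : 0 < R) (lam : ℝ) (hlam : 0 ≤ lam) :
    ∃ C : ℝ, 0 < C ∧ ∀ ε : ℝ, 0 < ε → ε ≤ 1 →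
      ∀ K : Set (EuclideanSpace ℝ (Fin n)), IsClosed K → Convex ℝ K →
        (∀ x ∈ K, -x ∈ K) → K ⊆ Metric.closedBall 0 R →
        ¬ Metric.closedBall 0 ε ⊆ K →
        MeasureTheory.volume (Metric.cthickening (lam * ε) K)
          ≤ ENNReal.ofReal (C * ε) := by
  refine ⟨2 * (1 + lam) * (2 * (R + lam)) ^ (n - 1), by positivity, ?_⟩
  intro ε hε hε1 K hKc hKconv hKsym hKR hKball
  rcases K.eq_empty_or_nonempty with rfl | hKne
  · simp
  obtain ⟨w, hw, hKw⟩ :=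
    exists_norm_eq_one_abs_inner_le_of_not_closedBall_subset hKc hKconv hKsym hKne hKball
  have hsub : cthickening (lam * ε) K ⊆ {y | |⟪w, y⟫| ≤ (1 + lam) * ε ∧ ‖y‖ ≤ R + lam} :=
    (cthickening_subset_setOf_abs_inner_le_and_norm_le hKc (by positivity) hw hKw hKR).trans
      fun y ⟨hy₁, hy₂⟩ => ⟨by linarith, by nlinarith⟩
  calc volume (cthickening (lam * ε) K)
      ≤ volume {y | |⟪w, y⟫| ≤ (1 + lam) * ε ∧ ‖y‖ ≤ R + lam} := measure_mono hsub
    _ ≤ ENNReal.ofReal (2 * ((1 + lam) * ε)) * ENNReal.ofReal (2 * (R + lam)) ^ (n - 1) := by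
      simpa only [finrank_euclideanSpace_fin] using
        volume_setOf_abs_inner_le_and_norm_le_le hw ((1 + lam) * ε) (R + lam)
    _ = ENNReal.ofReal (2 * (1 + lam) * (2 * (R + lam)) ^ (n - 1) * ε) := by
      rw [← ENNReal.ofReal_pow (by positivity), ← ENNReal.ofReal_mul (by positivity)]
      ring_nf

/-- The closed `λε`-neighborhood of a closed symmetric convex subset of the
ball of radius `R` in `ℝⁿ` whose inradius is less than `ε ∈ (0,1]` has Lebesgue
measure at most `C·ε`, where `C` depends only on `n`, `R`, and `λ`. -/
theorem symmetric_convex_neighborhood_volume (n : ℕ) (hn : 1 ≤ n)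
    (R : ℝ) (hR : 0 < R) (lam : ℝ) (hlam : 0 ≤ lam) :
    ∃ C : ℝ, 0 < C ∧ ∀ ε : ℝ, 0 < ε → ε ≤ 1 →
      ∀ K : Set (EuclideanSpace ℝ (Fin n)), IsClosed K → Convex ℝ K →
        (∀ x ∈ K, -x ∈ K) → K ⊆ Metric.closedBall 0 R →
        ¬ Metric.closedBall 0 ε ⊆ K →
        MeasureTheory.volume (Metric.cthickening (lam * ε) K)
          ≤ ENNReal.ofReal (C * ε) :=
  symmetric_convex_neighborhood_volume_general n R hR lam hlam
end

section
/- Let n, m ≥ 1. There exists a constant C > 0, depending only on n and m, with the following property: for every ε ∈ (0, 1) and every linear map L : ℝⁿ → ℝᵐ with operator norm at most 1 (so L is 1-Lipschitz) for which there exists a nonzero vector v ∈ ℝⁿ with ‖L(v)‖ < ε·‖v‖, and for every x ∈ ℝⁿ and ℓ > 0, there exist points x₁,…,x_k ∈ L(closedBall(x, ℓ)) with k ≤ C·ε^{1−n} such that L(closedBall(x, ℓ)) ⊆ ⋃_{i=1}^k closedBall(x_i, ε·ℓ). -/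
/-!
Pick an orthonormal basis `b` of `ℝⁿ` whose first vector `u` satisfies `‖L u‖ < ε`, and cut
`ℝⁿ` into boxes of side `ℓ / 2` along `u` and `ε ℓ / (2 n)` along the other `n - 1` basis
vectors. As `‖L‖ ≤ 1`, the image of a box has diameter at most
`(ℓ / 2) ε + (n - 1) ε ℓ / (2 n) ≤ ε ℓ`, while the ball `closedBall x ℓ` meets at most
`6 (4 n + 2)ⁿ⁻¹ ε¹⁻ⁿ` boxes: the coarse side costs `O(1)` boxes and each fine side `O(1/ε)`.
One image point from each box meeting the ball gives the net.
-/

open Metric Finset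
open scoped InnerProductSpace

theorem exists_finset_subset_image_cover_of_mapsTo {X Y ι : Type*} [PseudoMetricSpace Y]
    (f : X → Y) (g : X → ι) {S : Set X} {I : Finset ι} {r : ℝ} (hgS : Set.MapsTo g S I)
    (hfib : ∀ y ∈ S, ∀ z ∈ S, g y = g z → dist (f y) (f z) ≤ r) :
    ∃ s : Finset Y, ↑s ⊆ f '' S ∧ s.card ≤ I.card ∧ f '' S ⊆ ⋃ y ∈ s, closedBall y r := by
  classical
  obtain ⟨t, htS, hbij⟩ := Set.exists_subset_bijOn S g
  have ht : t.Finite := .of_finite_image (hbij.image_eq ▸ I.finite_toSet.subset hgS.image_subset)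
    hbij.injOn
  refine ⟨ht.toFinset.image f, by simpa using Set.image_mono htS, ?_, ?_⟩
  · exact card_image_le.trans <| card_le_card_of_injOn g
      (fun z hz => hgS (htS (ht.mem_toFinset.1 hz))) (by simpa using hbij.injOn)
  · rintro _ ⟨y, hy, rfl⟩
    obtain ⟨z, hzt, hzy⟩ := hbij.surjOn ⟨y, hy, rfl⟩
    exact Set.mem_biUnion (by simpa using ⟨z, hzt, rfl⟩) (hfib y hy z (htS hzt) hzy.symm)

theorem abs_sub_lt_of_floor_div_eq {p q δ : ℝ} (hδ : 0 < δ) (h : ⌊p / δ⌋ = ⌊q / δ⌋) :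
    |p - q| < δ := by
  have := Int.abs_sub_lt_one_of_floor_eq_floor h
  rwa [← sub_div, abs_div, abs_of_pos hδ, div_lt_one hδ] at this

theorem floor_div_mem_Icc {p R δ : ℝ} (hδ : 0 < δ) (hp : |p| ≤ R) :
    ⌊p / δ⌋ ∈ Icc ⌊-R / δ⌋ ⌊R / δ⌋ := by
  rw [abs_le] at hp
  exact mem_Icc.2 ⟨Int.floor_mono (by gcongr; exact hp.1), Int.floor_mono (by gcongr; exact hp.2)⟩

theorem card_Icc_floor_neg_floor_le {a : ℝ} (ha : 0 ≤ a) :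
    ((Icc ⌊-a⌋ ⌊a⌋).card : ℝ) ≤ 2 * a + 2 := by
  rw [Int.card_Icc, ← Int.cast_natCast, Int.toNat_eq_max]
  push_cast
  refine max_le ?_ (by linarith)
  linarith [Int.floor_le a, Int.lt_floor_add_one (-a)]

theorem exists_orthonormalBasis_apply_eq {ι 𝕜 E : Type*} [Fintype ι] [RCLike 𝕜]
    [NormedAddCommGroup E] [InnerProductSpace 𝕜 E] [FiniteDimensional 𝕜 E]
    (hE : Module.finrank 𝕜 E = Fintype.card ι) (i₀ : ι) {u : E} (hu : ‖u‖ = 1) :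
    ∃ b : OrthonormalBasis ι 𝕜 E, b i₀ = u := by
  obtain ⟨b, hb⟩ := Orthonormal.exists_orthonormalBasis_extension_of_card_eq hE
    (v := fun _ => u) (s := {i₀}) (by simp [hu])
  exact ⟨b, hb i₀ rfl⟩

theorem exists_norm_eq_one_norm_map_lt {E F : Type*} [NormedAddCommGroup E] [NormedSpace ℝ E]
    [SeminormedAddCommGroup F] [NormedSpace ℝ F] (L : E →L[ℝ] F) {ε : ℝ} {v : E} (hv : v ≠ 0)
    (hLv : ‖L v‖ < ε * ‖v‖) :
    ∃ u : E, ‖u‖ = 1 ∧ ‖L u‖ < ε := by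
  refine ⟨‖v‖⁻¹ • v, norm_smul_inv_norm hv, ?_⟩
  rwa [map_smul, norm_smul, norm_inv, norm_norm, inv_mul_lt_iff₀ (norm_pos_iff.2 hv), mul_comm]

namespace OrthonormalBasis

variable {ι E F : Type*} [Fintype ι] [NormedAddCommGroup E] [InnerProductSpace ℝ E]
  [SeminormedAddCommGroup F] [NormedSpace ℝ F] (b : OrthonormalBasis ι ℝ E)

theorem norm_map_le_sum (L : E →L[ℝ] F) (w : E) :
    ‖L w‖ ≤ ∑ i, |⟪b i, w⟫_ℝ| * ‖L (b i)‖ := by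
  conv_lhs => rw [← b.sum_repr' w, map_sum]
  refine (norm_sum_le _ _).trans_eq ?_
  simp only [map_smul, norm_smul, Real.norm_eq_abs]

noncomputable def gridCell (δ : ι → ℝ) (x y : E) : ι → ℤ :=
  fun i => ⌊⟪b i, y - x⟫_ℝ / δ i⌋

theorem gridCell_mem_piFinset [DecidableEq ι] {δ : ι → ℝ} (hδ : ∀ i, 0 < δ i) {x y : E} {ℓ : ℝ}
    (hy : y ∈ closedBall x ℓ) :
    b.gridCell δ x y ∈ Fintype.piFinset fun i => Icc ⌊-ℓ / δ i⌋ ⌊ℓ / δ i⌋ := by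
  refine Fintype.mem_piFinset.2 fun i => floor_div_mem_Icc (hδ i) ?_
  calc |⟪b i, y - x⟫_ℝ| ≤ ‖b i‖ * ‖y - x‖ := abs_real_inner_le_norm _ _
    _ ≤ ℓ := by rw [b.norm_eq_one, one_mul, ← dist_eq_norm]; exact hy

theorem norm_map_sub_le_of_gridCell_eq {δ : ι → ℝ} (hδ : ∀ i, 0 < δ i) (L : E →L[ℝ] F)
    {x y z : E} (h : b.gridCell δ x y = b.gridCell δ x z) :
    ‖L y - L z‖ ≤ ∑ i, δ i * ‖L (b i)‖ := by
  rw [← map_sub]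
  refine (b.norm_map_le_sum L _).trans (sum_le_sum fun i _ => ?_)
  gcongr
  have := abs_sub_lt_of_floor_div_eq (hδ i) (congrFun h i)
  rw [← inner_sub_right, sub_sub_sub_cancel_right] at this
  exact this.le

theorem exists_finset_cover_image_closedBall {δ : ι → ℝ} (hδ : ∀ i, 0 < δ i) (L : E →L[ℝ] F)
    (x : E) {ℓ : ℝ} (hℓ : 0 ≤ ℓ) :
    ∃ s : Finset F, ↑s ⊆ L '' closedBall x ℓ ∧ (s.card : ℝ) ≤ ∏ i, (2 * (ℓ / δ i) + 2) ∧
      L '' closedBall x ℓ ⊆ ⋃ y ∈ s, closedBall y (∑ i, δ i * ‖L (b i)‖) := by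
  classical
  obtain ⟨s, hsub, hcard, hcover⟩ := exists_finset_subset_image_cover_of_mapsTo L (b.gridCell δ x)
    (fun y hy => b.gridCell_mem_piFinset hδ hy)
    (fun y _ z _ h => by rw [dist_eq_norm]; exact b.norm_map_sub_le_of_gridCell_eq hδ L h)
  refine ⟨s, hsub, ?_, hcover⟩
  calc (s.card : ℝ) ≤ (Fintype.piFinset fun i => Icc ⌊-ℓ / δ i⌋ ⌊ℓ / δ i⌋).card := by
        exact_mod_cast hcard
    _ = ∏ i, ((Icc ⌊-(ℓ / δ i)⌋ ⌊ℓ / δ i⌋).card : ℝ) := by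
        simp [Fintype.card_piFinset, neg_div]
    _ ≤ _ := prod_le_prod (fun _ _ => by positivity) fun i _ =>
        card_Icc_floor_neg_floor_le (div_nonneg hℓ (hδ i).le)

end OrthonormalBasis

noncomputable def anisotropicMesh (k : ℕ) (ε ℓ : ℝ) : Fin (k + 1) → ℝ :=
  Fin.cons (ℓ / 2) fun _ => ε * ℓ / (2 * (k + 1))

section anisotropicMesh

variable {k : ℕ} {ε ℓ : ℝ}

theorem anisotropicMesh_pos (hε : 0 < ε) (hℓ : 0 < ℓ) (i : Fin (k + 1)) :
    0 < anisotropicMesh k ε ℓ i :=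
  i.cases (by simp only [anisotropicMesh, Fin.cons_zero]; positivity)
    fun _ => by simp only [anisotropicMesh, Fin.cons_succ]; positivity

theorem prod_anisotropicMesh_le (hε : 0 < ε) (hε1 : ε < 1) (hℓ : 0 < ℓ) :
    ∏ i, (2 * (ℓ / anisotropicMesh k ε ℓ i) + 2)
      ≤ 6 * (4 * (k + 1) + 2) ^ k * ε ^ ((1 : ℝ) - (k + 1 : ℕ)) := by
  have hε_pow : ε ^ ((1 : ℝ) - (k + 1 : ℕ)) = (ε ^ k)⁻¹ := by
    rw [Nat.cast_succ, sub_add_cancel_right, Real.rpow_neg hε.le, Real.rpow_natCast]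
  have hfine : 2 * (ℓ / (ε * ℓ / (2 * (k + 1)))) + 2 ≤ (4 * (k + 1) + 2) / ε := by
    rw [le_div_iff₀ hε]
    field_simp
    nlinarith
  calc ∏ i, (2 * (ℓ / anisotropicMesh k ε ℓ i) + 2)
      = 6 * (2 * (ℓ / (ε * ℓ / (2 * (k + 1)))) + 2) ^ k := by
        simp only [Fin.prod_univ_succ, anisotropicMesh, Fin.cons_zero, Fin.cons_succ, prod_const,
          card_univ, Fintype.card_fin, div_div_cancel₀ hℓ.ne']
        norm_num
    _ ≤ 6 * ((4 * (k + 1) + 2) / ε) ^ k := by gcongr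
    _ = 6 * (4 * (k + 1) + 2) ^ k * ε ^ ((1 : ℝ) - (k + 1 : ℕ)) := by
        rw [hε_pow, div_pow, div_eq_mul_inv, mul_assoc]

theorem sum_anisotropicMesh_mul_le (hε : 0 < ε) (hℓ : 0 < ℓ) {w : Fin (k + 1) → ℝ}
    (hw₀ : w 0 ≤ ε) (hw : ∀ i, w i ≤ 1) :
    ∑ i, anisotropicMesh k ε ℓ i * w i ≤ ε * ℓ := by
  rw [Fin.sum_univ_succ]
  simp only [anisotropicMesh, Fin.cons_zero, Fin.cons_succ]
  calc ℓ / 2 * w 0 + ∑ j : Fin k, ε * ℓ / (2 * (k + 1)) * w j.succ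
      ≤ ℓ / 2 * ε + ∑ _j : Fin k, ε * ℓ / (2 * (k + 1)) * 1 := by
        gcongr with j
        exact hw _
    _ ≤ ε * ℓ := by
        rw [sum_const, card_univ, Fintype.card_fin, nsmul_eq_mul, mul_one, mul_div_assoc']
        field_simp
        nlinarith [mul_pos hε hℓ]

end anisotropicMesh

theorem nets_lemma_euclidean_general (n m : ℕ) (hn : 1 ≤ n) :
    ∃ C : ℝ, 0 < C ∧ ∀ ε : ℝ, 0 < ε → ε < 1 →
      ∀ L : EuclideanSpace ℝ (Fin n) →L[ℝ] EuclideanSpace ℝ (Fin m), ‖L‖ ≤ 1 →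
      (∃ v : EuclideanSpace ℝ (Fin n), v ≠ 0 ∧ ‖L v‖ < ε * ‖v‖) →
      ∀ (x : EuclideanSpace ℝ (Fin n)) (ℓ : ℝ), 0 < ℓ →
        ∃ s : Finset (EuclideanSpace ℝ (Fin m)),
          ↑s ⊆ L '' Metric.closedBall x ℓ ∧
          (s.card : ℝ) ≤ C * ε ^ ((1 : ℝ) - n) ∧
          L '' Metric.closedBall x ℓ ⊆ ⋃ y ∈ s, Metric.closedBall y (ε * ℓ) := by
  obtain ⟨k, rfl⟩ := Nat.exists_eq_add_of_le' hn
  refine ⟨6 * (4 * (k + 1) + 2) ^ k, by positivity, ?_⟩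
  rintro ε hε hε1 L hL ⟨v, hv, hLv⟩ x ℓ hℓ
  obtain ⟨u, hu, hLu⟩ := exists_norm_eq_one_norm_map_lt L hv hLv
  obtain ⟨b, rfl⟩ := exists_orthonormalBasis_apply_eq (𝕜 := ℝ) (by simp) (0 : Fin (k + 1)) hu
  have hLb (i : Fin (k + 1)) : ‖L (b i)‖ ≤ 1 := by
    simpa [b.norm_eq_one] using L.le_of_opNorm_le hL (b i)
  obtain ⟨s, hsub, hcard, hcover⟩ :=
    b.exists_finset_cover_image_closedBall (anisotropicMesh_pos hε hℓ) L x hℓ.le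
  refine ⟨s, hsub, hcard.trans (prod_anisotropicMesh_le hε hε1 hℓ), hcover.trans ?_⟩
  exact Set.iUnion₂_mono fun _ _ =>
    closedBall_subset_closedBall (sum_anisotropicMesh_mul_le hε hℓ hLu.le hLb)

/-- Euclidean case of the nets lemma: a linear map `L : ℝⁿ → ℝᵐ` of operator
norm at most `1` that contracts some direction by a factor `ε` maps each closed
ball of radius `ℓ` into a union of at most `C·ε^{1-n}` closed balls of radius
`ε·ℓ` centered at points of the image, where `C` depends only on `n` and `m`. -/
theorem nets_lemma_euclidean (n m : ℕ) (hn : 1 ≤ n) (hm : 1 ≤ m) :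
    ∃ C : ℝ, 0 < C ∧ ∀ ε : ℝ, 0 < ε → ε < 1 →
      ∀ L : EuclideanSpace ℝ (Fin n) →L[ℝ] EuclideanSpace ℝ (Fin m), ‖L‖ ≤ 1 →
      (∃ v : EuclideanSpace ℝ (Fin n), v ≠ 0 ∧ ‖L v‖ < ε * ‖v‖) →
      ∀ (x : EuclideanSpace ℝ (Fin n)) (ℓ : ℝ), 0 < ℓ →
        ∃ s : Finset (EuclideanSpace ℝ (Fin m)),
          ↑s ⊆ L '' Metric.closedBall x ℓ ∧
          (s.card : ℝ) ≤ C * ε ^ ((1 : ℝ) - n) ∧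
          L '' Metric.closedBall x ℓ ⊆ ⋃ y ∈ s, Metric.closedBall y (ε * ℓ) :=
  nets_lemma_euclidean_general n m hn
end

section
/- Let n ≥ 1. There exists a constant C > 0, depending only on n, with the following property: for every ε ∈ (0, 1) and every closed convex symmetric set K in n-dimensional Euclidean space with K contained in the closed unit ball centered at the origin and with the closed ball of radius ε centered at the origin NOT contained in K, every ε-separated subset S of K is finite with cardinality at most C·ε^{1−n}. -/
/-!
A closed symmetric convex set missing a point `y` with `‖y‖ ≤ ε` lies, by Hahn–Banach, in a slab
`|⟪v, x⟫| ≤ ε` with `‖v‖ = 1`. The balls of radius `ε / 4` about the points of an `ε`-separated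
subset are pairwise disjoint and lie in the slab `|⟪v, z⟫| ≤ 5ε/4` cut by the ball of radius `5/4`,
whose volume is at most `(5ε/2)(5/2)^(n-1)`. Comparing volumes bounds the number of points by
`10ⁿ ε^(1-n) / vol(B(0,1))`.
-/

open Metric MeasureTheory Set InnerProductSpace
open scoped RealInnerProductSpace ENNReal

theorem Set.finite_and_ncard_mul_le_of_encard_mul_le {α : Type*} {S : Set α} {a b : ℝ≥0∞}
    (h : S.encard * a ≤ b) (ha : a ≠ 0) (hb : b ≠ ⊤) :
    S.Finite ∧ S.ncard * a.toReal ≤ b.toReal := by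
  have hS : S.Finite := by
    rw [← encard_ne_top_iff]
    rintro htop
    rw [htop, ENat.toENNReal_top, ENNReal.top_mul ha] at h
    exact hb (top_le_iff.1 h)
  refine ⟨hS, ?_⟩
  rw [← hS.cast_ncard_eq, ENat.toENNReal_coe] at h
  simpa [ENNReal.toReal_mul] using ENNReal.toReal_mono hb h

theorem Set.encard_mul_measure_closedBall_le {E : Type*} [SeminormedAddCommGroup E]
    [MeasurableSpace E] [OpensMeasurableSpace E] [MeasurableAdd E] (μ : Measure E)
    [μ.IsAddLeftInvariant] {S A : Set E} {r : ℝ} (hS : S.PairwiseDisjoint (closedBall · r))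
    (hA : ∀ s ∈ S, closedBall s r ⊆ A) : S.encard * μ (closedBall 0 r) ≤ μ A := by
  have hball : ∀ s : E, μ (closedBall s r) = μ (closedBall 0 r) := fun s ↦ by
    rw [← measure_preimage_add μ s, preimage_add_closedBall, sub_self]
  calc S.encard * μ (closedBall 0 r) = ∑' s : S, μ (closedBall (s : E) r) := by
        simp only [hball, ENNReal.tsum_set_const]
    _ ≤ μ (⋃ s : S, closedBall (s : E) r) :=
        tsum_meas_le_meas_iUnion_of_disjoint μ (fun _ ↦ measurableSet_closedBall)
          fun s t hst ↦ hS s.2 t.2 (Subtype.coe_injective.ne hst)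
    _ ≤ μ A := measure_mono (iUnion_subset fun s ↦ hA s s.2)

section Slab

variable {E : Type*} [NormedAddCommGroup E] [InnerProductSpace ℝ E]

theorem exists_norm_eq_one_abs_inner_le_norm_of_notMem [CompleteSpace E] {K : Set E}
    (hKc : IsClosed K) (hKv : Convex ℝ K) (hKs : ∀ x ∈ K, -x ∈ K) (hK : K.Nonempty)
    {y : E} (hy : y ∉ K) : ∃ v : E, ‖v‖ = 1 ∧ ∀ x ∈ K, |⟪v, x⟫| ≤ ‖y‖ := by
  obtain ⟨f, u, hfK, hfy⟩ := geometric_hahn_banach_closed_point hKv hKc hy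
  have habs : ∀ x ∈ K, |f x| < u := fun x hx ↦
    abs_lt.2 ⟨neg_lt.1 (by simpa using hfK (-x) (hKs x hx)), hfK x hx⟩
  have hfy' : u < ‖f‖ * ‖y‖ := hfy.trans_le ((le_abs_self _).trans (f.le_opNorm y))
  obtain ⟨x₀, hx₀⟩ := hK
  have hf : 0 < ‖f‖ := by
    by_contra! h
    have := (abs_nonneg (f x₀)).trans_lt (habs x₀ hx₀)
    nlinarith [norm_nonneg f, norm_nonneg y]
  refine ⟨‖f‖⁻¹ • (toDual ℝ E).symm f, ?_, fun x hx ↦ ?_⟩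
  · rw [norm_smul, LinearIsometryEquiv.norm_map, norm_inv, norm_norm, inv_mul_cancel₀ hf.ne']
  · rw [real_inner_smul_left, toDual_symm_apply, abs_mul, abs_inv, abs_norm,
      inv_mul_le_iff₀ hf]
    linarith [habs x hx]

theorem closedBall_subset_setOf_abs_inner_le_and_norm_le {v s : E} (hv : ‖v‖ = 1)
    {a R r : ℝ} (hsa : |⟪v, s⟫| ≤ a) (hsR : ‖s‖ ≤ R) :
    closedBall s r ⊆ {z | |⟪v, z⟫| ≤ a + r ∧ ‖z‖ ≤ R + r} := by
  intro z hz
  rw [mem_closedBall_iff_norm] at hz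
  have hvz : |⟪v, z - s⟫| ≤ r := (abs_real_inner_le_norm v _).trans (by rwa [hv, one_mul])
  rw [inner_sub_right] at hvz
  refine ⟨?_, ?_⟩
  · linarith [abs_sub_abs_le_abs_sub ⟪v, z⟫ ⟪v, s⟫]
  · calc ‖z‖ ≤ ‖s‖ + ‖z - s‖ := norm_le_norm_add_norm_sub' z s
      _ ≤ R + r := add_le_add hsR hz

variable [FiniteDimensional ℝ E] [MeasurableSpace E] [BorelSpace E]

theorem OrthonormalBasis.volume_setOf_forall_abs_inner_le {ι : Type*} [Fintype ι]
    (b : OrthonormalBasis ι ℝ E) (d : ι → ℝ) :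
    volume {z : E | ∀ i, |⟪b i, z⟫| ≤ d i} = ∏ i, ENNReal.ofReal (2 * d i) := by
  have hbox : {z : E | ∀ i, |⟪b i, z⟫| ≤ d i}
      = b.repr ⁻¹' (WithLp.ofLp ⁻¹' univ.pi fun i ↦ Icc (-d i) (d i)) := by
    ext z
    simp only [mem_ofPred_eq, mem_preimage, mem_univ_pi, mem_Icc, abs_le, b.repr_apply_apply]
  have hmeas : MeasurableSet (univ.pi fun i ↦ Icc (-d i) (d i)) :=
    MeasurableSet.univ_pi fun _ ↦ measurableSet_Icc
  rw [hbox, b.measurePreserving_repr.measure_preimage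
      (hmeas.preimage (WithLp.measurable_ofLp _ _)).nullMeasurableSet,
    (PiLp.volume_preserving_ofLp ι).measure_preimage hmeas.nullMeasurableSet, volume_pi_pi]
  simp only [Real.volume_Icc, sub_neg_eq_add, two_mul]

theorem volume_setOf_abs_inner_le_and_norm_le_le_s8 {m : ℕ} (hE : Module.finrank ℝ E = m + 1)
    {v : E} (hv : ‖v‖ = 1) (a R : ℝ) :
    volume {z : E | |⟪v, z⟫| ≤ a ∧ ‖z‖ ≤ R}
      ≤ ENNReal.ofReal (2 * a) * ENNReal.ofReal (2 * R) ^ m := by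
  have hv' : Orthonormal ℝ (({0} : Set (Fin (m + 1))).domRestrict fun _ ↦ v) := by
    rw [orthonormal_iff_ite]
    rintro ⟨i, rfl⟩ ⟨j, rfl⟩
    simp [hv]
  obtain ⟨b, hb⟩ := hv'.exists_orthonormalBasis_extension_of_card_eq
    (by rw [hE, Fintype.card_fin])
  have hsub : {z : E | |⟪v, z⟫| ≤ a ∧ ‖z‖ ≤ R}
      ⊆ {z | ∀ i, |⟪b i, z⟫| ≤ (Fin.cons a fun _ ↦ R : Fin (m + 1) → ℝ) i} := by
    rintro z ⟨hza, hzR⟩ i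
    refine Fin.cases ?_ (fun j ↦ ?_) i
    · simpa [hb 0 rfl] using hza
    · exact (abs_real_inner_le_norm _ _).trans (by rw [b.orthonormal.1, one_mul]; exact hzR)
  calc volume {z : E | |⟪v, z⟫| ≤ a ∧ ‖z‖ ≤ R} ≤ _ := measure_mono hsub
    _ = _ := by rw [b.volume_setOf_forall_abs_inner_le, Fin.prod_univ_succ]; simp

theorem encard_mul_volume_closedBall_le_of_separated {m : ℕ} (hE : Module.finrank ℝ E = m + 1)
    {v : E} (hv : ‖v‖ = 1) {a R ε : ℝ} (hε : 0 < ε) {S : Set E}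
    (hSv : ∀ s ∈ S, |⟪v, s⟫| ≤ a) (hSR : ∀ s ∈ S, ‖s‖ ≤ R)
    (hSsep : ∀ s ∈ S, ∀ t ∈ S, s ≠ t → ε ≤ dist s t) :
    S.encard * volume (closedBall (0 : E) (ε / 4))
      ≤ ENNReal.ofReal (2 * (a + ε / 4)) * ENNReal.ofReal (2 * (R + ε / 4)) ^ m :=
  (S.encard_mul_measure_closedBall_le volume
    (fun s hs t ht hst ↦ closedBall_disjoint_closedBall (by linarith [hSsep s hs t ht hst]))
    fun s hs ↦ closedBall_subset_setOf_abs_inner_le_and_norm_le hv (hSv s hs) (hSR s hs)).trans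
  (volume_setOf_abs_inner_le_and_norm_le_le_s8 hE hv _ _)

theorem finite_and_ncard_le_of_separated_of_abs_inner_le {m : ℕ}
    (hE : Module.finrank ℝ E = m + 1) {v : E} (hv : ‖v‖ = 1) {ε : ℝ} (hε : 0 < ε) (hε1 : ε ≤ 1)
    {S : Set E} (hSv : ∀ s ∈ S, |⟪v, s⟫| ≤ ε) (hSR : ∀ s ∈ S, ‖s‖ ≤ 1)
    (hSsep : ∀ s ∈ S, ∀ t ∈ S, s ≠ t → ε ≤ dist s t) :
    S.Finite ∧ (S.ncard : ℝ) ≤ 10 ^ (m + 1) / (volume (ball (0 : E) 1)).toReal / ε ^ m := by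
  set c := volume (ball (0 : E) 1)
  have hc : c ≠ 0 := (measure_ball_pos _ _ one_pos).ne'
  have hc' : 0 < c.toReal := ENNReal.toReal_pos hc measure_ball_lt_top.ne
  have hvol := encard_mul_volume_closedBall_le_of_separated hE hv hε hSv hSR hSsep
  rw [Measure.addHaar_closedBall _ _ (by positivity), hE] at hvol
  obtain ⟨hfin, hcard⟩ :=
    finite_and_ncard_mul_le_of_encard_mul_le hvol (by simpa [hε] using hc) (by finiteness)
  refine ⟨hfin, ?_⟩
  rw [ENNReal.toReal_mul, ENNReal.toReal_mul, ENNReal.toReal_pow,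
    ENNReal.toReal_ofReal (by positivity), ENNReal.toReal_ofReal (by positivity),
    ENNReal.toReal_ofReal (by positivity)] at hcard
  rw [div_div, le_div_iff₀ (by positivity)]
  have hmul : (S.ncard : ℝ) * (c.toReal * ε ^ m) * ε ≤ 10 ^ (m + 1) * ε := by
    calc (S.ncard : ℝ) * (c.toReal * ε ^ m) * ε
        = 4 ^ (m + 1) * (S.ncard * ((ε / 4) ^ (m + 1) * c.toReal)) := by
          rw [div_pow]; field_simp; ring
      _ ≤ 4 ^ (m + 1) * (2 * (ε + ε / 4) * (2 * (1 + ε / 4)) ^ m) := by gcongr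
      _ ≤ 4 ^ (m + 1) * (2 * (ε + ε / 4) * (5 / 2) ^ m) := by gcongr; linarith
      _ = 10 ^ (m + 1) * ε := by rw [show (10 : ℝ) = 4 * (5 / 2) by norm_num, mul_pow]; ring
  exact le_of_mul_le_mul_right hmul hε

end Slab

theorem separated_net_in_thin_convex_body_general (n : ℕ) :
    ∃ C : ℝ, 0 < C ∧ ∀ ε : ℝ, 0 < ε → ε < 1 →
      ∀ K : Set (EuclideanSpace ℝ (Fin n)), IsClosed K → Convex ℝ K →
        (∀ x ∈ K, -x ∈ K) → K ⊆ Metric.closedBall 0 1 →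
        ¬ Metric.closedBall 0 ε ⊆ K →
        ∀ S : Set (EuclideanSpace ℝ (Fin n)), S ⊆ K →
          (∀ a ∈ S, ∀ b ∈ S, a ≠ b → ε ≤ dist a b) →
          S.Finite ∧ (S.ncard : ℝ) ≤ C * ε ^ ((1 : ℝ) - n) := by
  have hc : 0 < (volume (ball (0 : EuclideanSpace ℝ (Fin n)) 1)).toReal :=
    ENNReal.toReal_pos (measure_ball_pos _ _ one_pos).ne' measure_ball_lt_top.ne
  refine ⟨10 ^ n / (volume (ball (0 : EuclideanSpace ℝ (Fin n)) 1)).toReal, by positivity, ?_⟩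
  intro ε hε hε1 K hKc hKv hKs hK1 hKε S hSK hSsep
  rcases S.eq_empty_or_nonempty with rfl | ⟨s₀, hs₀⟩
  · simp only [finite_empty, ncard_empty, Nat.cast_zero, true_and]
    positivity
  obtain ⟨y, hyε, hyK⟩ := not_subset.1 hKε
  obtain ⟨v, hv, hvK⟩ :=
    exists_norm_eq_one_abs_inner_le_norm_of_notMem hKc hKv hKs ⟨s₀, hSK hs₀⟩ hyK
  obtain ⟨m, rfl⟩ : ∃ m, n = m + 1 := Nat.exists_eq_succ_of_ne_zero <| by
    rintro rfl
    simp [Subsingleton.elim v 0] at hv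
  have hpow : ε ^ ((1 : ℝ) - ↑(m + 1)) = (ε ^ m)⁻¹ := by
    rw [Nat.cast_succ, sub_add_cancel_right, Real.rpow_neg hε.le, Real.rpow_natCast]
  rw [hpow, ← div_eq_mul_inv]
  exact finite_and_ncard_le_of_separated_of_abs_inner_le finrank_euclideanSpace_fin hv hε hε1.le
    (fun s hs ↦ (hvK s (hSK hs)).trans (mem_closedBall_zero_iff.1 hyε))
    (fun s hs ↦ mem_closedBall_zero_iff.1 (hK1 (hSK hs))) hSsep

/-- An `ε`-separated subset of a closed symmetric convex subset of the unit
ball of `ℝⁿ` whose inradius is less than `ε` has at most `C·ε^{1-n}` points,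
where `C` depends only on `n`. -/
theorem separated_net_in_thin_convex_body (n : ℕ) (hn : 1 ≤ n) :
    ∃ C : ℝ, 0 < C ∧ ∀ ε : ℝ, 0 < ε → ε < 1 →
      ∀ K : Set (EuclideanSpace ℝ (Fin n)), IsClosed K → Convex ℝ K →
        (∀ x ∈ K, -x ∈ K) → K ⊆ Metric.closedBall 0 1 →
        ¬ Metric.closedBall 0 ε ⊆ K →
        ∀ S : Set (EuclideanSpace ℝ (Fin n)), S ⊆ K →
          (∀ a ∈ S, ∀ b ∈ S, a ≠ b → ε ≤ dist a b) →
          S.Finite ∧ (S.ncard : ℝ) ≤ C * ε ^ ((1 : ℝ) - n) :=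
  separated_net_in_thin_convex_body_general n
end
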